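/- Let α > 0 and ω > 0. The function D(x) := α²(e^{2x√ω} − 1) + 2√ω (√(α²+ω) + √ω) e^{2x√ω} of the real variable x vanishes if and only if x = x*, where x* = −log( (2√ω √(α²+ω) + α² + 2ω)/α² ) / (2√ω), and moreover x* < 0. Hence the explicit solution u(x,t) = 2α√ω (√(α²+ω) + √ω) e^{x√ω + iωt} / D(x) has its only singularity in x at the negative point x*, and is smooth for x ≥ 0. -/

import Mathlib

open MeasureTheory Set

noncomputable section

/-- The explicit function
`u(x,t) = 2α√ω(√(α²+ω)+√ω) e^{x√ω + iωt} / (α²(e^{2x√ω}-1) + 2√ω(√(α²+ω)+√ω)e^{2x√ω})`. -/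
def uExact (α ω : ℝ) : ℝ → ℝ → ℂ := fun x t =>
  ((2 * α * Real.sqrt ω * (Real.sqrt (α ^ 2 + ω) + Real.sqrt ω) : ℝ) : ℂ) *
      Complex.exp ((x * Real.sqrt ω : ℝ) + Complex.I * ω * t) /
    (((α ^ 2 : ℝ) : ℂ) * (Complex.exp ((2 * x * Real.sqrt ω : ℝ) : ℂ) - 1) +
      ((2 * Real.sqrt ω * (Real.sqrt (α ^ 2 + ω) + Real.sqrt ω) : ℝ) : ℂ) *
        Complex.exp ((2 * x * Real.sqrt ω : ℝ) : ℂ))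

/-- For `α > 0`, `ω > 0`, the real denominator
`D(x) = α²(e^{2x√ω}-1) + 2√ω(√(α²+ω)+√ω)e^{2x√ω}` vanishes exactly at the point
`x* = -log((2√ω√(α²+ω)+α²+2ω)/α²)/(2√ω)`, and `x* < 0`; hence `uExact α ω` is smooth on
`{x ≥ 0} × ℝ`. -/
theorem denominator_vanishes_only_at_negative_point (α ω : ℝ) (hα : 0 < α) (hω : 0 < ω) :
    (∀ x : ℝ,
      α ^ 2 * (Real.exp (2 * x * Real.sqrt ω) - 1) +
          2 * Real.sqrt ω * (Real.sqrt (α ^ 2 + ω) + Real.sqrt ω) *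
            Real.exp (2 * x * Real.sqrt ω) = 0 ↔
        x = -Real.log ((2 * Real.sqrt ω * Real.sqrt (α ^ 2 + ω) + α ^ 2 + 2 * ω) / α ^ 2) /
              (2 * Real.sqrt ω)) ∧
    -Real.log ((2 * Real.sqrt ω * Real.sqrt (α ^ 2 + ω) + α ^ 2 + 2 * ω) / α ^ 2) /
        (2 * Real.sqrt ω) < 0 ∧
    ContDiffOn ℝ (⊤ : ℕ∞) (fun p : ℝ × ℝ => uExact α ω p.1 p.2) (Set.Ici 0 ×ˢ Set.univ) := by
  set s := Real.sqrt ω with hs_def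
  set b := Real.sqrt (α ^ 2 + ω) with hb_def
  have hs : 0 < s := Real.sqrt_pos.mpr hω
  have hb : 0 < b := Real.sqrt_pos.mpr (by positivity)
  have hs2 : s * s = ω := Real.mul_self_sqrt hω.le
  set C : ℝ := 2 * s * b + α ^ 2 + 2 * ω with hC_def
  have hα2 : (0:ℝ) < α ^ 2 := by positivity
  have hCgt : α ^ 2 < C := by nlinarith
  have hCpos : (0:ℝ) < C := lt_trans hα2 hCgt
  -- rewrite of D
  have hD : ∀ x : ℝ,
      α ^ 2 * (Real.exp (2 * x * s) - 1) + 2 * s * (b + s) * Real.exp (2 * x * s)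
        = C * Real.exp (2 * x * s) - α ^ 2 := by
    intro x; rw [hC_def]; nlinarith [Real.exp_pos (2 * x * s)]
  have hlog : -Real.log (C / α ^ 2) = Real.log (α ^ 2 / C) := by
    rw [Real.log_div hCpos.ne' hα2.ne', Real.log_div hα2.ne' hCpos.ne']; ring
  have hiff : ∀ x : ℝ,
      α ^ 2 * (Real.exp (2 * x * s) - 1) + 2 * s * (b + s) * Real.exp (2 * x * s) = 0 ↔
        x = -Real.log (C / α ^ 2) / (2 * s) := by
    intro x
    rw [hD x, sub_eq_zero, hlog]
    have hratio : (0:ℝ) < α ^ 2 / C := by positivity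
    constructor
    · intro h
      have hexp : Real.exp (2 * x * s) = α ^ 2 / C := by
        field_simp at h ⊢; linarith
      have : 2 * x * s = Real.log (α ^ 2 / C) := by
        rw [← Real.log_exp (2 * x * s), hexp]
      field_simp
      linarith
    · intro h
      have hx : 2 * x * s = Real.log (α ^ 2 / C) := by
        rw [h]; field_simp
      rw [hx, Real.exp_log hratio]
      field_simp
  have hxneg : -Real.log (C / α ^ 2) / (2 * s) < 0 := by
    have h1 : (1:ℝ) < C / α ^ 2 := (one_lt_div hα2).mpr hCgt
    have := Real.log_pos h1
    apply div_neg_of_neg_of_pos (by linarith) (by linarith)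
  refine ⟨hiff, hxneg, ?_⟩
  -- smoothness
  have hden_ne : ∀ p : ℝ × ℝ, p ∈ Set.Ici (0:ℝ) ×ˢ (Set.univ : Set ℝ) →
      (((α ^ 2 : ℝ) : ℂ) * (Complex.exp ((2 * p.1 * s : ℝ) : ℂ) - 1) +
        ((2 * s * (b + s) : ℝ) : ℂ) * Complex.exp ((2 * p.1 * s : ℝ) : ℂ)) ≠ 0 := by
    intro p hp
    have hx : 0 ≤ p.1 := hp.1
    have hcast : (((α ^ 2 : ℝ) : ℂ) * (Complex.exp ((2 * p.1 * s : ℝ) : ℂ) - 1) +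
        ((2 * s * (b + s) : ℝ) : ℂ) * Complex.exp ((2 * p.1 * s : ℝ) : ℂ))
        = ((α ^ 2 * (Real.exp (2 * p.1 * s) - 1) + 2 * s * (b + s) * Real.exp (2 * p.1 * s) : ℝ) : ℂ) := by
      rw [← Complex.ofReal_exp]; push_cast; ring
    rw [hcast]
    have hge : (1:ℝ) ≤ Real.exp (2 * p.1 * s) := by
      rw [show (1:ℝ) = Real.exp 0 by simp]
      exact Real.exp_le_exp.mpr (by positivity)
    have hpos : 0 < α ^ 2 * (Real.exp (2 * p.1 * s) - 1) + 2 * s * (b + s) * Real.exp (2 * p.1 * s) := by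
      nlinarith
    exact_mod_cast hpos.ne'
  have hnum : ContDiff ℝ (⊤ : ℕ∞) (fun p : ℝ × ℝ =>
      ((2 * α * s * (b + s) : ℝ) : ℂ) *
        Complex.exp ((p.1 * s : ℝ) + Complex.I * ω * p.2)) := by
    apply ContDiff.mul contDiff_const
    apply Complex.contDiff_exp.comp
    have h1 : ContDiff ℝ (⊤ : ℕ∞) (fun p : ℝ × ℝ => ((p.1 * s : ℝ) : ℂ)) :=
      Complex.ofRealCLM.contDiff.comp ((contDiff_fst).mul contDiff_const)
    have h2 : ContDiff ℝ (⊤ : ℕ∞) (fun p : ℝ × ℝ => Complex.I * ω * (p.2 : ℂ)) :=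
      ContDiff.mul contDiff_const (Complex.ofRealCLM.contDiff.comp contDiff_snd)
    exact h1.add h2
  have hden : ContDiff ℝ (⊤ : ℕ∞) (fun p : ℝ × ℝ =>
      ((α ^ 2 : ℝ) : ℂ) * (Complex.exp ((2 * p.1 * s : ℝ) : ℂ) - 1) +
        ((2 * s * (b + s) : ℝ) : ℂ) * Complex.exp ((2 * p.1 * s : ℝ) : ℂ)) := by
    have h1 : ContDiff ℝ (⊤ : ℕ∞) (fun p : ℝ × ℝ => Complex.exp ((2 * p.1 * s : ℝ) : ℂ)) := by
      apply Complex.contDiff_exp.comp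
      exact Complex.ofRealCLM.contDiff.comp ((contDiff_const.mul contDiff_fst).mul contDiff_const)
    exact ((contDiff_const.mul (h1.sub contDiff_const))).add (contDiff_const.mul h1)
  have heq : (fun p : ℝ × ℝ => uExact α ω p.1 p.2)
      = fun p : ℝ × ℝ =>
        (((2 * α * s * (b + s) : ℝ) : ℂ) * Complex.exp ((p.1 * s : ℝ) + Complex.I * ω * p.2)) /
        (((α ^ 2 : ℝ) : ℂ) * (Complex.exp ((2 * p.1 * s : ℝ) : ℂ) - 1) +
          ((2 * s * (b + s) : ℝ) : ℂ) * Complex.exp ((2 * p.1 * s : ℝ) : ℂ)) := rfl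
  rw [heq]
  simp only [div_eq_mul_inv]
  exact hnum.contDiffOn.mul (hden.contDiffOn.inv hden_ne)

end
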